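/- arXiv:1901.09718 — 2 statements merged into one kernel-verified Lean document; each statement's English description precedes it below -/
import Mathlib

section
/- Let (x̄,ū) be a W^{1,1} local minimizer for (FP3) and let [τ1,τ2] ⊆ [t0,T] with τ1 < τ2 be such that −1 < x̄(t) < 1 for all t ∈ (τ1,τ2). If x̄(τ1) = x̄(τ2) = −1, then τ2 − τ1 < 4/a and, with t̂ := (τ1+τ2)/2, one has x̄(t) = −1 + a(t − τ1) for t ∈ [τ1, t̂] and x̄(t) = −1 − a(t − τ2) for t ∈ (t̂, τ2]. -/
open MeasureTheory Set

noncomputable section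

/-- A feasible process for problem (FP3): `x` is the (absolutely continuous) state
trajectory, represented as the indefinite integral of its a.e. derivative `-a*u`,
`u` is a measurable control with values in `[-1,1]` a.e., the initial condition is
`x t0 = x0`, and the bilateral state constraint `-1 ≤ x t ≤ 1` holds on `[t0,T]`. -/
def FP3Feasible (a t0 T x0 : ℝ) (x u : ℝ → ℝ) : Prop :=
  AEStronglyMeasurable u (volume.restrict (Icc t0 T)) ∧
  (∀ᵐ t ∂(volume.restrict (Icc t0 T)), u t ∈ Icc (-1 : ℝ) 1) ∧
  (∀ t ∈ Icc t0 T, x t = x0 + ∫ s in t0..t, -(a * u s)) ∧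
  (∀ t ∈ Icc t0 T, x t ∈ Icc (-1 : ℝ) 1)

/-- The cost functional of (FP3) on the interval `[t1,t2]`. -/
def FP3Cost (lam t1 t2 : ℝ) (x u : ℝ → ℝ) : ℝ :=
  ∫ t in t1..t2, -(Real.exp (-(lam * t)) * (x t + u t))

/-- `(x,u)` is a `W^{1,1}` local minimizer of (FP3). -/
def FP3LocalMin (a lam t0 T x0 : ℝ) (x u : ℝ → ℝ) : Prop :=
  FP3Feasible a t0 T x0 x u ∧
  ∃ δ > (0 : ℝ), ∀ y v, FP3Feasible a t0 T x0 y v →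
    (∫ t in t0..T, |(-(a * v t)) - (-(a * u t))|) ≤ δ →
    FP3Cost lam t0 T x u ≤ FP3Cost lam t0 T y v

/-- `(x,u)` is a `W^{1,1}` global minimizer of (FP3). -/
def FP3GlobalMin (a lam t0 T x0 : ℝ) (x u : ℝ → ℝ) : Prop :=
  FP3Feasible a t0 T x0 x u ∧
  ∀ y v, FP3Feasible a t0 T x0 y v → FP3Cost lam t0 T x u ≤ FP3Cost lam t0 T y v

/-- The function `Δ(t1,t2) = e^{-λ t1} - 2 e^{-λ (t1+t2)/2} + e^{-λ t2}`. -/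
def FP3Delta (lam t1 t2 : ℝ) : ℝ :=
  Real.exp (-(lam * t1)) - 2 * Real.exp (-(lam * (t1 + t2) / 2)) + Real.exp (-(lam * t2))

/-- The characteristic constant `ρ = (1/λ) ln (a/(a-λ))` of (FP3). -/
def FP3rho (a lam : ℝ) : ℝ := (1 / lam) * Real.log (a / (a - lam))

/-!
A local minimizer is a global one: the feasible set is convex and the cost is affine.
Between two contacts with `-1` the trajectory lies below the tent
`min 1 (min (-1 + a (t - τ₁)) (-1 + a (τ₂ - t)))` (slope bound `a` and the state constraint),
and the tent is itself a feasible trajectory `y` that agrees with `x̄` outside `(τ₁, τ₂)`.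
Integrating by parts, the control part of the cost changes by `(λ/a) ∫ e^{-λt} (y - x̄)`, so
the cost changes by `-(1 - λ/a) ∫ e^{-λt} (y - x̄) ≤ 0`; as `λ < a`, optimality forces `y = x̄`.
Since `x̄ < 1` at the midpoint, the tent does not reach the cap `1`, whence `τ₂ - τ₁ < 4/a`.
-/

theorem integral_mul_eq_sub_integral_deriv_mul_primitive {g d : ℝ → ℝ} {α β : ℝ}
    (hg : ContDiff ℝ 1 g) (hd : IntervalIntegrable d volume α β) :
    ∫ t in α..β, g t * d t =
      g β * (∫ s in α..β, d s) - ∫ t in α..β, deriv g t * ∫ s in α..t, d s := by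
  have hP := hd.absolutelyContinuousOnInterval_intervalIntegral (c := α) left_mem_uIcc
  have hparts := AbsolutelyContinuousOnInterval.integral_mul_deriv_eq_deriv_mul
    (hg.contDiffOn.absolutelyContinuousOnInterval (a := α) (b := β)) hP
  rw [intervalIntegral.integral_same, mul_zero, sub_zero] at hparts
  refine (intervalIntegral.integral_congr_ae ?_).trans hparts
  filter_upwards [hd.ae_hasDerivAt_integral] with t ht hmem
  rw [(ht (uIoc_subset_uIcc hmem) α left_mem_uIcc).deriv]

theorem integral_exp_neg_mul_mul_of_integral_eq_zero {d : ℝ → ℝ} {α β : ℝ} (lam : ℝ)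
    (hd : IntervalIntegrable d volume α β) (hd0 : ∫ s in α..β, d s = 0) :
    ∫ t in α..β, Real.exp (-(lam * t)) * d t =
      lam * ∫ t in α..β, Real.exp (-(lam * t)) * ∫ s in α..t, d s := by
  have hderiv (t : ℝ) :
      deriv (fun t => Real.exp (-(lam * t))) t = -lam * Real.exp (-(lam * t)) := by
    have h : HasDerivAt (fun t => Real.exp (-(lam * t))) (Real.exp (-(lam * t)) * -(lam * 1)) t :=
      ((hasDerivAt_id t).const_mul lam).neg.exp
    rw [h.deriv]
    ring
  rw [integral_mul_eq_sub_integral_deriv_mul_primitive (g := fun t => Real.exp (-(lam * t)))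
    (by fun_prop) hd]
  simp only [hd0, hderiv, neg_mul, mul_assoc, intervalIntegral.integral_neg,
    intervalIntegral.integral_const_mul]
  ring

section Primitive

variable {f x : ℝ → ℝ} {t0 T x0 s t : ℝ}

theorem sub_eq_integral_of_eq_add_primitive (hf : IntegrableOn f (Icc t0 T))
    (hx : ∀ t ∈ Icc t0 T, x t = x0 + ∫ r in t0..t, f r) (hs : s ∈ Icc t0 T)
    (ht : t ∈ Icc t0 T) : x t - x s = ∫ r in s..t, f r := by
  have hint {b : ℝ} (hb : b ∈ Icc t0 T) : IntervalIntegrable f volume t0 b :=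
    (hf.mono_set (uIcc_subset_Icc (left_mem_Icc.2 (hb.1.trans hb.2)) hb)).intervalIntegrable
  rw [hx t ht, hx s hs, add_sub_add_left_eq_sub,
    intervalIntegral.integral_interval_sub_left (hint ht) (hint hs)]

theorem sub_eq_integral_of_eqOn_Ioc {g : ℝ → ℝ} (hf : IntegrableOn f (Icc t0 T))
    (hx : ∀ t ∈ Icc t0 T, x t = x0 + ∫ r in t0..t, f r) (hs : s ∈ Icc t0 T)
    (ht : t ∈ Icc t0 T) (hst : s ≤ t) (hfg : EqOn f g (Ioc s t)) :
    x t - x s = ∫ r in s..t, g r := by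
  rw [sub_eq_integral_of_eq_add_primitive hf hx hs ht]
  refine intervalIntegral.integral_congr_ae (ae_of_all _ fun r hr => hfg ?_)
  rwa [uIoc_of_le hst] at hr

end Primitive

/-- The largest function with slope at most `a` in absolute value that equals `-1` at `τ1`
and `τ2` and stays below `1`. -/
def FP3Tent (a τ1 τ2 t : ℝ) : ℝ := min 1 (min (-1 + a * (t - τ1)) (-1 + a * (τ2 - t)))

section Tent

variable {a τ1 τ2 t : ℝ}

theorem FP3Tent_eq_rise (ha : 0 ≤ a) (hsym : t - τ1 ≤ τ2 - t) (hcap : a * (t - τ1) ≤ 2) :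
    FP3Tent a τ1 τ2 t = -1 + a * (t - τ1) := by
  have hle : -1 + a * (t - τ1) ≤ -1 + a * (τ2 - t) := by
    linarith [mul_le_mul_of_nonneg_left hsym ha]
  rw [FP3Tent, min_eq_left hle, min_eq_right (by linarith)]

theorem FP3Tent_eq_fall (ha : 0 ≤ a) (hsym : τ2 - t ≤ t - τ1) (hcap : a * (τ2 - t) ≤ 2) :
    FP3Tent a τ1 τ2 t = -1 + a * (τ2 - t) := by
  have hle : -1 + a * (τ2 - t) ≤ -1 + a * (t - τ1) := by
    linarith [mul_le_mul_of_nonneg_left hsym ha]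
  rw [FP3Tent, min_eq_right hle, min_eq_right (by linarith)]

theorem FP3Tent_mem_Icc (ha : 0 ≤ a) (ht : t ∈ Icc τ1 τ2) : FP3Tent a τ1 τ2 t ∈ Icc (-1) 1 := by
  have hrise : 0 ≤ a * (t - τ1) := mul_nonneg ha (sub_nonneg.2 ht.1)
  have hfall : 0 ≤ a * (τ2 - t) := mul_nonneg ha (sub_nonneg.2 ht.2)
  exact ⟨le_min (by norm_num) (le_min (by linarith) (by linarith)), min_le_left _ _⟩

end Tent

def FP3TentControl (c τ1 τ2 : ℝ) (u : ℝ → ℝ) : ℝ → ℝ :=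
  (Ioc τ1 τ2).piecewise (fun t => if t ≤ τ1 + c then -1 else if t ≤ τ2 - c then 0 else 1) u

theorem eq_FP3Tent_of_tentControl {a t0 T x0 τ1 τ2 c : ℝ} {u y : ℝ → ℝ} (ha : 0 < a)
    (hc : c = min ((τ2 - τ1) / 2) (2 / a)) (h1 : t0 ≤ τ1) (h2 : τ2 ≤ T)
    (hv : IntegrableOn (fun r => -(a * FP3TentControl c τ1 τ2 u r)) (Icc t0 T))
    (hy : ∀ t ∈ Icc t0 T, y t = x0 + ∫ r in t0..t, -(a * FP3TentControl c τ1 τ2 u r))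
    (hy1 : y τ1 = -1) {t : ℝ} (ht : t ∈ Icc τ1 τ2) : y t = FP3Tent a τ1 τ2 t := by
  have hc0 : 0 ≤ c := hc ▸ le_min (by linarith [ht.1.trans ht.2]) (by positivity)
  have hcL : c ≤ (τ2 - τ1) / 2 := hc ▸ min_le_left _ _
  have hca : a * c ≤ 2 := (le_div_iff₀' ha).1 (hc ▸ min_le_right _ _)
  have hconst {s t k : ℝ} (hs : τ1 ≤ s) (hst : s ≤ t) (ht : t ≤ τ2)
      (hk : ∀ r ∈ Ioc s t, (if r ≤ τ1 + c then -1 else if r ≤ τ2 - c then 0 else 1 : ℝ) = k) :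
      y t = y s - a * k * (t - s) := by
    have hsI : s ∈ Icc t0 T := ⟨h1.trans hs, (hst.trans ht).trans h2⟩
    have htI : t ∈ Icc t0 T := ⟨h1.trans (hs.trans hst), ht.trans h2⟩
    have hincr := sub_eq_integral_of_eqOn_Ioc hv hy hsI htI hst (g := fun _ => -(a * k))
      fun r hr => by
        have hr' : r ∈ Ioc τ1 τ2 := ⟨hs.trans_lt hr.1, hr.2.trans ht⟩
        simp only [FP3TentControl, piecewise_eq_of_mem _ _ _ hr', hk r hr]
    rw [intervalIntegral.integral_const, smul_eq_mul] at hincr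
    linarith
  have hrise {t : ℝ} (ht1 : τ1 ≤ t) (ht2 : t ≤ τ1 + c) : y t = -1 + a * (t - τ1) := by
    rw [hconst le_rfl ht1 (by linarith) (k := -1) fun r hr => if_pos (hr.2.trans ht2), hy1]
    ring
  have hplateau {t : ℝ} (ht1 : τ1 + c ≤ t) (ht2 : t ≤ τ2 - c) : y t = -1 + a * c := by
    rw [hconst (by linarith) ht1 (by linarith) (k := 0) fun r hr => by
      simp only [if_neg (not_le.2 hr.1), if_pos (hr.2.trans ht2)], hrise (by linarith) le_rfl]
    ring
  rcases le_or_gt t (τ1 + c) with hup | hup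
  · rw [hrise ht.1 hup, FP3Tent_eq_rise ha.le (by linarith)
      ((mul_le_mul_of_nonneg_left (by linarith) ha.le).trans hca)]
  rcases le_or_gt (τ2 - c) t with hdown | hdown
  · rw [hconst (by linarith) hdown ht.2 (k := 1) fun r hr => by
        simp only [if_neg (not_le.2 ((by linarith : τ1 + c ≤ τ2 - c).trans_lt hr.1)),
          if_neg (not_le.2 hr.1)],
      hplateau (by linarith) le_rfl, FP3Tent_eq_fall ha.le (by linarith)
        ((mul_le_mul_of_nonneg_left (by linarith) ha.le).trans hca)]
    ring
  -- strictly inside the plateau, so the rise was stopped by the cap `1`, not by the midpoint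
  have hcap : a * c = 2 := by
    rw [hc.trans ((min_choice _ _).resolve_left fun hmid => by linarith [hc.trans hmid])]
    field_simp
  have hrise' : a * c ≤ a * (t - τ1) := mul_le_mul_of_nonneg_left (by linarith) ha.le
  have hfall' : a * c ≤ a * (τ2 - t) := mul_le_mul_of_nonneg_left (by linarith) ha.le
  rw [hplateau hup.le hdown.le, hcap, FP3Tent, min_eq_left (le_min (by linarith) (by linarith))]
  norm_num

namespace FP3Feasible

variable {a t0 T x0 : ℝ} {x u : ℝ → ℝ}

theorem integrableOn_control (h : FP3Feasible a t0 T x0 x u) : IntegrableOn u (Icc t0 T) :=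
  Integrable.of_bound h.1 1 (h.2.1.mono fun _ hu => abs_le.2 hu)

theorem integrableOn_velocity (h : FP3Feasible a t0 T x0 x u) :
    IntegrableOn (fun r => -(a * u r)) (Icc t0 T) :=
  (h.integrableOn_control.const_mul a).neg

theorem intervalIntegrable_velocity (h : FP3Feasible a t0 T x0 x u) {s t : ℝ}
    (hs : s ∈ Icc t0 T) (ht : t ∈ Icc t0 T) :
    IntervalIntegrable (fun r => -(a * u r)) volume s t :=
  (h.integrableOn_velocity.mono_set (uIcc_subset_Icc hs ht)).intervalIntegrable

theorem sub_eq_integral (h : FP3Feasible a t0 T x0 x u) {s t : ℝ} (hs : s ∈ Icc t0 T)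
    (ht : t ∈ Icc t0 T) : x t - x s = ∫ r in s..t, -(a * u r) :=
  sub_eq_integral_of_eq_add_primitive h.integrableOn_velocity h.2.2.1 hs ht

theorem abs_sub_le (h : FP3Feasible a t0 T x0 x u) (ha : 0 ≤ a) {s t : ℝ} (hs : s ∈ Icc t0 T)
    (ht : t ∈ Icc t0 T) : |x t - x s| ≤ a * |t - s| := by
  rw [h.sub_eq_integral hs ht, ← Real.norm_eq_abs]
  refine intervalIntegral.norm_integral_le_of_norm_le_const_ae (f := fun r => -(a * u r)) ?_
  filter_upwards [(ae_restrict_iff' measurableSet_Icc).1 h.2.1] with r hr hmem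
  have hu := abs_le.2 (hr (uIcc_subset_Icc hs ht (uIoc_subset_uIcc hmem)))
  rw [Real.norm_eq_abs, abs_neg, abs_mul, abs_of_nonneg ha]
  exact mul_le_of_le_one_right ha hu

theorem continuousOn (h : FP3Feasible a t0 T x0 x u) (ha : 0 ≤ a) :
    ContinuousOn x (Icc t0 T) :=
  (LipschitzOnWith.of_dist_le_mul (K := Real.toNNReal a) fun t ht s hs => by
    rw [Real.coe_toNNReal a ha, Real.dist_eq, Real.dist_eq]
    exact h.abs_sub_le ha hs ht).continuousOn

theorem intervalIntegrable_cost (h : FP3Feasible a t0 T x0 x u) (ha : 0 ≤ a) (htT : t0 ≤ T)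
    (lam : ℝ) :
    IntervalIntegrable (fun t => -(Real.exp (-(lam * t)) * (x t + u t))) volume t0 T := by
  have hxu : IntegrableOn (fun t => x t + u t) (uIcc t0 T) := by
    rw [uIcc_of_le htT]
    exact ((h.continuousOn ha).integrableOn_compact isCompact_Icc).add h.integrableOn_control
  exact (hxu.continuousOn_mul (by fun_prop) isCompact_uIcc).neg.intervalIntegrable

theorem convex_comb {y v : ℝ → ℝ} (hxu : FP3Feasible a t0 T x0 x u)
    (hyv : FP3Feasible a t0 T x0 y v) {θ : ℝ} (hθ0 : 0 ≤ θ) (hθ1 : θ ≤ 1) :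
    FP3Feasible a t0 T x0 (fun t => (1 - θ) * x t + θ * y t)
      (fun t => (1 - θ) * u t + θ * v t) := by
  have hθ : 0 ≤ 1 - θ := sub_nonneg.2 hθ1
  refine ⟨(hxu.1.const_mul _).add (hyv.1.const_mul _), ?_, fun t ht => ?_, fun t ht => ?_⟩
  · filter_upwards [hxu.2.1, hyv.2.1] with t hu hv
    exact convex_Icc _ _ hu hv hθ hθ0 (sub_add_cancel 1 θ)
  · have ht0 : t0 ∈ Icc t0 T := left_mem_Icc.2 (ht.1.trans ht.2)
    calc (1 - θ) * x t + θ * y t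
        = (1 - θ) * (x0 + ∫ r in t0..t, -(a * u r)) + θ * (x0 + ∫ r in t0..t, -(a * v r)) := by
          rw [hxu.2.2.1 t ht, hyv.2.2.1 t ht]
      _ = x0 + ∫ r in t0..t, ((1 - θ) * -(a * u r) + θ * -(a * v r)) := by
          rw [intervalIntegral.integral_add
            ((hxu.intervalIntegrable_velocity ht0 ht).const_mul _)
            ((hyv.intervalIntegrable_velocity ht0 ht).const_mul _),
            intervalIntegral.integral_const_mul, intervalIntegral.integral_const_mul]
          ring
      _ = x0 + ∫ r in t0..t, -(a * ((1 - θ) * u r + θ * v r)) := by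
          congr 1
          exact intervalIntegral.integral_congr fun r _ => by ring
  · exact convex_Icc _ _ (hxu.2.2.2 t ht) (hyv.2.2.2 t ht) hθ hθ0 (sub_add_cancel 1 θ)

theorem sub_eq_integral_velocity_sub {y v : ℝ → ℝ} (hxu : FP3Feasible a t0 T x0 x u)
    (hyv : FP3Feasible a t0 T x0 y v) {t : ℝ} (ht : t ∈ Icc t0 T) :
    y t - x t = ∫ r in t0..t, (-(a * v r) - -(a * u r)) := by
  have ht0 : t0 ∈ Icc t0 T := left_mem_Icc.2 (ht.1.trans ht.2)
  rw [hyv.2.2.1 t ht, hxu.2.2.1 t ht, intervalIntegral.integral_sub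
    (hyv.intervalIntegrable_velocity ht0 ht) (hxu.intervalIntegrable_velocity ht0 ht)]
  ring

theorem aestronglyMeasurable_tentControl (h : FP3Feasible a t0 T x0 x u) (c τ1 τ2 : ℝ) :
    AEStronglyMeasurable (FP3TentControl c τ1 τ2 u) (volume.restrict (Icc t0 T)) := by
  refine AEStronglyMeasurable.piecewise measurableSet_Ioc ?_ h.1.restrict
  exact (Measurable.ite measurableSet_Iic measurable_const
    (Measurable.ite measurableSet_Iic measurable_const measurable_const)).aestronglyMeasurable

theorem ae_tentControl_mem_Icc (h : FP3Feasible a t0 T x0 x u) (c τ1 τ2 : ℝ) :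
    ∀ᵐ t ∂(volume.restrict (Icc t0 T)), FP3TentControl c τ1 τ2 u t ∈ Icc (-1 : ℝ) 1 := by
  filter_upwards [h.2.1] with t ht
  by_cases hmem : t ∈ Ioc τ1 τ2
  · simp only [FP3TentControl, piecewise_eq_of_mem _ _ _ hmem]
    split_ifs <;> norm_num
  · simpa only [FP3TentControl, piecewise_eq_of_notMem _ _ _ hmem] using ht

variable {τ1 τ2 : ℝ}

theorem le_tent (h : FP3Feasible a t0 T x0 x u) (ha : 0 ≤ a) (h1 : t0 ≤ τ1) (h2 : τ2 ≤ T)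
    (hx1 : x τ1 = -1) (hx2 : x τ2 = -1) {t : ℝ} (ht : t ∈ Icc τ1 τ2) :
    x t ≤ FP3Tent a τ1 τ2 t := by
  have htI : t ∈ Icc t0 T := ⟨h1.trans ht.1, ht.2.trans h2⟩
  have hrise := (abs_le.1 (h.abs_sub_le ha ⟨h1, ht.1.trans htI.2⟩ htI)).2
  have hfall := (abs_le.1 (h.abs_sub_le ha ⟨htI.1.trans ht.2, h2⟩ htI)).2
  rw [abs_of_nonneg (sub_nonneg.2 ht.1)] at hrise
  rw [abs_of_nonpos (sub_nonpos.2 ht.2), neg_sub] at hfall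
  exact le_min (h.2.2.2 t htI).2 (le_min (by linarith) (by linarith))

theorem exists_tent (h : FP3Feasible a t0 T x0 x u) (ha : 0 < a) (h1 : t0 ≤ τ1)
    (h12 : τ1 ≤ τ2) (h2 : τ2 ≤ T) (hx1 : x τ1 = -1) (hx2 : x τ2 = -1) :
    ∃ y v, FP3Feasible a t0 T x0 y v ∧ (∀ t ∈ Icc t0 T, t ∉ Ioo τ1 τ2 → y t = x t) ∧
      ∀ t ∈ Icc τ1 τ2, y t = FP3Tent a τ1 τ2 t := by
  -- rise at full speed until the midpoint or the cap `1` is reached, whichever comes first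
  set v := FP3TentControl (min ((τ2 - τ1) / 2) (2 / a)) τ1 τ2 u
  set y : ℝ → ℝ := fun t => x0 + ∫ r in t0..t, -(a * v r)
  have hv_int : IntegrableOn (fun r => -(a * v r)) (Icc t0 T) :=
    ((Integrable.of_bound (h.aestronglyMeasurable_tentControl _ τ1 τ2) 1
      ((h.ae_tentControl_mem_Icc _ τ1 τ2).mono fun _ hv => abs_le.2 hv)).const_mul a).neg
  have hagree {s t : ℝ} (hs : s ∈ Icc t0 T) (ht : t ∈ Icc t0 T) (hst : s ≤ t)
      (hdisj : Disjoint (Ioc s t) (Ioc τ1 τ2)) : y t - y s = x t - x s := by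
    rw [h.sub_eq_integral hs ht]
    refine sub_eq_integral_of_eqOn_Ioc hv_int (fun _ _ => rfl) hs ht hst fun r hr => ?_
    simp only [v, FP3TentControl, piecewise_eq_of_notMem _ _ _ (hdisj.notMem_of_mem_left hr)]
  have ht0 : t0 ∈ Icc t0 T := ⟨le_rfl, h1.trans (h12.trans h2)⟩
  have hleft : ∀ t ∈ Icc t0 τ1, y t = x t := fun t ht => by
    have hy0 : y t0 = x t0 := by simp only [y, intervalIntegral.integral_same, h.2.2.1 t0 ht0]
    linarith [hagree ht0 ⟨ht.1, ht.2.trans (h12.trans h2)⟩ ht.1 (Ioc_disjoint_Ioc_of_le ht.2)]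
  have htent : ∀ t ∈ Icc τ1 τ2, y t = FP3Tent a τ1 τ2 t :=
    fun t ht => eq_FP3Tent_of_tentControl ha rfl h1 h2 hv_int (fun _ _ => rfl)
      ((hleft τ1 ⟨h1, le_rfl⟩).trans hx1) ht
  have hright : ∀ t ∈ Icc τ2 T, y t = x t := fun t ht => by
    have hy2 : y τ2 = x τ2 := by
      rw [htent τ2 ⟨h12, le_rfl⟩, hx2, FP3Tent_eq_fall ha.le (by linarith) (by simp)]
      ring
    linarith [hagree ⟨h1.trans h12, h2⟩ ⟨h1.trans (h12.trans ht.1), ht.2⟩ ht.1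
      (Ioc_disjoint_Ioc_of_le le_rfl).symm]
  have hout : ∀ t ∈ Icc t0 T, t ∉ Ioo τ1 τ2 → y t = x t := fun t ht hmem => by
    rcases le_or_gt t τ1 with hle | hlt
    · exact hleft t ⟨ht.1, hle⟩
    · exact hright t ⟨not_lt.1 fun h' => hmem ⟨hlt, h'⟩, ht.2⟩
  refine ⟨y, v, ⟨h.aestronglyMeasurable_tentControl _ τ1 τ2, h.ae_tentControl_mem_Icc _ τ1 τ2,
    fun _ _ => rfl, fun t ht => ?_⟩, hout, htent⟩
  by_cases hmem : t ∈ Ioo τ1 τ2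
  · exact htent t (Ioo_subset_Icc_self hmem) ▸ FP3Tent_mem_Icc ha.le (Ioo_subset_Icc_self hmem)
  · exact hout t ht hmem ▸ h.2.2.2 t ht

end FP3Feasible

theorem FP3Cost_convex_comb {lam t1 t2 θ : ℝ} {x u y v : ℝ → ℝ}
    (hxu : IntervalIntegrable (fun t => -(Real.exp (-(lam * t)) * (x t + u t))) volume t1 t2)
    (hyv : IntervalIntegrable (fun t => -(Real.exp (-(lam * t)) * (y t + v t))) volume t1 t2) :
    FP3Cost lam t1 t2 (fun t => (1 - θ) * x t + θ * y t) (fun t => (1 - θ) * u t + θ * v t) =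
      (1 - θ) * FP3Cost lam t1 t2 x u + θ * FP3Cost lam t1 t2 y v := by
  simp only [FP3Cost]
  rw [← intervalIntegral.integral_const_mul, ← intervalIntegral.integral_const_mul,
    ← intervalIntegral.integral_add (hxu.const_mul _) (hyv.const_mul _)]
  exact intervalIntegral.integral_congr fun t _ => by ring

theorem FP3LocalMin.fp3GlobalMin {a lam t0 T x0 : ℝ} {x u : ℝ → ℝ}
    (h : FP3LocalMin a lam t0 T x0 x u) (ha : 0 ≤ a) (htT : t0 ≤ T) :
    FP3GlobalMin a lam t0 T x0 x u := by
  obtain ⟨hxu, δ, hδ, hmin⟩ := h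
  refine ⟨hxu, fun y v hyv => ?_⟩
  set M := ∫ t in t0..T, |(-(a * v t)) - (-(a * u t))|
  have hM : 0 ≤ M := intervalIntegral.integral_nonneg htT fun _ _ => abs_nonneg _
  obtain ⟨c, hc, hcM⟩ := exists_pos_mul_lt hδ M
  set θ := min c 1
  have hθ0 : 0 < θ := lt_min hc one_pos
  have hθM : θ * M ≤ δ := by
    nlinarith [mul_le_mul_of_nonneg_right (min_le_left c 1) hM]
  have hdist : ∫ t in t0..T, |(-(a * ((1 - θ) * u t + θ * v t))) - (-(a * u t))| = θ * M := by
    rw [← intervalIntegral.integral_const_mul]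
    refine intervalIntegral.integral_congr fun t _ => ?_
    have hdiff : -(a * ((1 - θ) * u t + θ * v t)) - -(a * u t) = θ * (-(a * v t) - -(a * u t)) := by
      ring
    rw [hdiff, abs_mul, abs_of_pos hθ0]
  have hcomb := hmin _ _ (hxu.convex_comb hyv hθ0.le (min_le_right c 1)) (hdist ▸ hθM)
  rw [FP3Cost_convex_comb (hxu.intervalIntegrable_cost ha htT lam)
    (hyv.intervalIntegrable_cost ha htT lam)] at hcomb
  exact le_of_mul_le_mul_left (by linarith) hθ0

theorem FP3Cost_sub_eq {a lam t0 T x0 : ℝ} {x u y v : ℝ → ℝ}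
    (hxu : FP3Feasible a t0 T x0 x u) (hyv : FP3Feasible a t0 T x0 y v) (ha : 0 < a)
    (htT : t0 ≤ T) (hT : y T = x T) :
    FP3Cost lam t0 T y v - FP3Cost lam t0 T x u =
      -(1 - lam / a) * ∫ t in t0..T, Real.exp (-(lam * t)) * (y t - x t) := by
  have ht0 : t0 ∈ Icc t0 T := left_mem_Icc.2 htT
  have hT' : T ∈ Icc t0 T := right_mem_Icc.2 htT
  set d : ℝ → ℝ := fun r => -(a * v r) - -(a * u r)
  have hd : IntervalIntegrable d volume t0 T :=
    (hyv.intervalIntegrable_velocity ht0 hT').sub (hxu.intervalIntegrable_velocity ht0 hT')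
  have hparts := integral_exp_neg_mul_mul_of_integral_eq_zero lam hd
    (by rw [← hxu.sub_eq_integral_velocity_sub hyv hT', hT, sub_self])
  have hweighted : ∫ t in t0..T, Real.exp (-(lam * t)) * (∫ r in t0..t, d r) =
      ∫ t in t0..T, Real.exp (-(lam * t)) * (y t - x t) :=
    intervalIntegral.integral_congr fun t ht => by
      rw [hxu.sub_eq_integral_velocity_sub hyv (by rwa [uIcc_of_le htT] at ht)]
  rw [hweighted] at hparts
  have he : ContinuousOn (fun t => Real.exp (-(lam * t))) (uIcc t0 T) := by fun_prop
  have hyx : IntervalIntegrable (fun t => Real.exp (-(lam * t)) * (y t - x t)) volume t0 T := by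
    refine ContinuousOn.intervalIntegrable (he.mul ?_)
    rw [uIcc_of_le htT]
    exact (hyv.continuousOn ha.le).sub (hxu.continuousOn ha.le)
  unfold FP3Cost
  rw [← intervalIntegral.integral_sub (hyv.intervalIntegrable_cost ha.le htT lam)
    (hxu.intervalIntegrable_cost ha.le htT lam)]
  -- `v - u = -d / a`
  calc ∫ t in t0..T,
        (-(Real.exp (-(lam * t)) * (y t + v t)) - -(Real.exp (-(lam * t)) * (x t + u t)))
      = ∫ t in t0..T,
          (a⁻¹ * (Real.exp (-(lam * t)) * d t) - Real.exp (-(lam * t)) * (y t - x t)) := by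
        refine intervalIntegral.integral_congr fun t _ => ?_
        field_simp
        ring
    _ = -(1 - lam / a) * ∫ t in t0..T, Real.exp (-(lam * t)) * (y t - x t) := by
        rw [intervalIntegral.integral_sub ((hd.continuousOn_mul he).const_mul _) hyx,
          intervalIntegral.integral_const_mul, hparts]
        ring

theorem FP3GlobalMin.eqOn_of_le {a lam t0 T x0 : ℝ} {x u y v : ℝ → ℝ}
    (hmin : FP3GlobalMin a lam t0 T x0 x u) (hyv : FP3Feasible a t0 T x0 y v) (ha : 0 < a)
    (hal : lam < a) (htT : t0 < T) (hle : ∀ t ∈ Icc t0 T, x t ≤ y t) (hT : y T = x T) :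
    EqOn y x (Icc t0 T) := by
  intro c hc
  by_contra hne
  have hpos : 0 < ∫ t in t0..T, Real.exp (-(lam * t)) * (y t - x t) := by
    have hcont : ContinuousOn (fun t => Real.exp (-(lam * t)) * (y t - x t)) (Icc t0 T) :=
      (Continuous.continuousOn (by fun_prop)).mul
        ((hyv.continuousOn ha.le).sub (hmin.1.continuousOn ha.le))
    simpa using intervalIntegral.integral_lt_integral_of_continuousOn_of_le_of_exists_lt htT
      continuousOn_const hcont
      (fun t ht => mul_nonneg (Real.exp_pos _).le (sub_nonneg.2 (hle t (Ioc_subset_Icc_self ht))))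
      ⟨c, hc, mul_pos (Real.exp_pos _) (sub_pos.2 ((hle c hc).lt_of_ne' hne))⟩
  have hgain := mul_pos (sub_pos.2 ((div_lt_one ha).2 hal)) hpos
  have hcost := FP3Cost_sub_eq (lam := lam) hmin.1 hyv ha htT.le hT
  linarith [hmin.2 y v hyv]

theorem fp3_statement_S3_general
    (a lam t0 T x0 : ℝ) (hal : lam < a) (hlam : 0 < lam)
    (xb ub : ℝ → ℝ) (hmin : FP3LocalMin a lam t0 T x0 xb ub)
    (τ1 τ2 : ℝ) (h1 : t0 ≤ τ1) (h12 : τ1 < τ2) (h2 : τ2 ≤ T)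
    (hin : ∀ t ∈ Ioo τ1 τ2, xb t ∈ Ioo (-1 : ℝ) 1)
    (ha1 : xb τ1 = -1) (ha2 : xb τ2 = -1) :
    τ2 - τ1 < 4 / a ∧
    (∀ t ∈ Icc τ1 ((τ1 + τ2) / 2), xb t = -1 + a * (t - τ1)) ∧
    (∀ t ∈ Ioc ((τ1 + τ2) / 2) τ2, xb t = -1 - a * (t - τ2)) := by
  have ha : 0 < a := hlam.trans hal
  have htT : t0 < T := h1.trans_lt (h12.trans_le h2)
  obtain ⟨y, v, hyv, hout, htent⟩ := hmin.1.exists_tent ha h1 h12.le h2 ha1 ha2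
  have hle (t : ℝ) (ht : t ∈ Icc t0 T) : xb t ≤ y t := by
    by_cases hmem : t ∈ Ioo τ1 τ2
    · exact htent t (Ioo_subset_Icc_self hmem) ▸
        hmin.1.le_tent ha.le h1 h2 ha1 ha2 (Ioo_subset_Icc_self hmem)
    · exact (hout t ht hmem).ge
  have hyx := (hmin.fp3GlobalMin ha.le htT.le).eqOn_of_le hyv ha hal htT hle
    (hout T (right_mem_Icc.2 htT.le) fun hT => hT.2.not_ge h2)
  have hshape : ∀ t ∈ Icc τ1 τ2, xb t = FP3Tent a τ1 τ2 t :=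
    fun t ht => (hyx (Icc_subset_Icc h1 h2 ht)).symm.trans (htent t ht)
  have hpeak : a * ((τ2 - τ1) / 2) < 2 := by
    by_contra! hcap
    have hmid := (hin ((τ1 + τ2) / 2) ⟨by linarith, by linarith⟩).2
    rw [hshape _ ⟨by linarith, by linarith⟩, FP3Tent,
      min_eq_left (le_min (by linarith) (by linarith))] at hmid
    exact lt_irrefl 1 hmid
  refine ⟨(lt_div_iff₀' ha).2 (by linarith), fun t ht => ?_, fun t ht => ?_⟩
  · rw [hshape t ⟨ht.1, by linarith [ht.2]⟩, FP3Tent_eq_rise ha.le (by linarith [ht.2])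
      ((mul_le_mul_of_nonneg_left (by linarith [ht.2]) ha.le).trans hpeak.le)]
  · rw [hshape t ⟨by linarith [ht.1], ht.2⟩, FP3Tent_eq_fall ha.le (by linarith [ht.1])
      ((mul_le_mul_of_nonneg_left (by linarith [ht.1]) ha.le).trans hpeak.le)]
    ring

/-- If a local minimizer's trajectory stays in `(-1,1)` on `(τ1,τ2)`
and equals `-1` at both endpoints, then `τ2 - τ1 < 4/a` and the trajectory is the
tent with peak at the midpoint. -/
theorem fp3_statement_S3
    (a lam t0 T x0 : ℝ) (hal : lam < a) (hlam : 0 < lam)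
    (ht0 : 0 ≤ t0) (htT : t0 < T) (hx0 : x0 ∈ Icc (-1 : ℝ) 1)
    (xb ub : ℝ → ℝ) (hmin : FP3LocalMin a lam t0 T x0 xb ub)
    (τ1 τ2 : ℝ) (h1 : t0 ≤ τ1) (h12 : τ1 < τ2) (h2 : τ2 ≤ T)
    (hin : ∀ t ∈ Ioo τ1 τ2, xb t ∈ Ioo (-1 : ℝ) 1)
    (ha1 : xb τ1 = -1) (ha2 : xb τ2 = -1) :
    τ2 - τ1 < 4 / a ∧
    (∀ t ∈ Icc τ1 ((τ1 + τ2) / 2), xb t = -1 + a * (t - τ1)) ∧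
    (∀ t ∈ Ioc ((τ1 + τ2) / 2) τ2, xb t = -1 - a * (t - τ2)) :=
  fp3_statement_S3_general a lam t0 T x0 hal hlam xb ub hmin τ1 τ2 h1 h12 h2 hin ha1 ha2
end
end

section
/- Let t0 ≤ t1 < t2 ≤ T. If (x̃,ũ) and (x̂,û) are feasible processes for (FP3) such that x̃(t) = −1 for all t ∈ [t1,t2], and x̂(t) = −1 + a(t − t1) for t ∈ [t1, t̂] and x̂(t) = −1 − a(t − t2) for t ∈ (t̂, t2], where t̂ := (t1+t2)/2, then J(x̂,û)|_{[t1,t2]} − J(x̃,ũ)|_{[t1,t2]} = −(1/λ)(a/λ − 1)·Δ(t1,t2); consequently J(x̂,û)|_{[t1,t2]} < J(x̃,ũ)|_{[t1,t2]}. -/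
open MeasureTheory Set

noncomputable section

/-!
Since `ẋ = -a u`, integrating `e^{-λt} u` by parts against the absolutely continuous state
gives `J|_{[t1,t2]}(x,u) = (λ/a - 1) ∫ e^{-λt} x + (e^{-λ t2} x(t2) - e^{-λ t1} x(t1)) / a`.
Both processes equal `-1` at `t1` and `t2`, and `x̂ - x̃ = a · min (t - t1) (t2 - t)` on
`[t1,t2]`, whose integral against `e^{-λt}` is `a Δ / λ²`. Finally
`Δ = (e^{-λ t1/2} - e^{-λ t2/2})² > 0` and `λ/a - 1 < 0`.
-/

theorem hasDerivAt_exp_neg_mul (lam t : ℝ) :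
    HasDerivAt (fun s => Real.exp (-(lam * s))) (-lam * Real.exp (-(lam * t))) t := by
  simpa [mul_comm] using ((hasDerivAt_id t).const_mul lam).neg.exp

theorem integral_exp_neg_mul_mul_sub {lam : ℝ} (hlam : lam ≠ 0) (c p q : ℝ) :
    ∫ t in p..q, Real.exp (-(lam * t)) * (t - c)
      = Real.exp (-(lam * p)) * ((p - c) / lam + 1 / lam ^ 2)
        - Real.exp (-(lam * q)) * ((q - c) / lam + 1 / lam ^ 2) := by
  have hF : ∀ t ∈ uIcc p q,
      HasDerivAt (fun s => -(Real.exp (-(lam * s)) * ((s - c) / lam + 1 / lam ^ 2)))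
        (Real.exp (-(lam * t)) * (t - c)) t := fun t _ => by
    refine (((hasDerivAt_exp_neg_mul lam t).mul (((hasDerivAt_id' t).sub_const c).div_const lam
      |>.add_const (1 / lam ^ 2))).neg).congr_deriv ?_
    field_simp
    ring
  rw [intervalIntegral.integral_eq_sub_of_hasDerivAt hF
    ((by fun_prop : Continuous fun t => Real.exp (-(lam * t)) * (t - c)).intervalIntegrable _ _)]
  ring

theorem integral_exp_neg_mul_mul_min_sub {lam t1 t2 : ℝ} (hlam : lam ≠ 0) (h12 : t1 ≤ t2) :
    ∫ t in t1..t2, Real.exp (-(lam * t)) * min (t - t1) (t2 - t)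
      = FP3Delta lam t1 t2 / lam ^ 2 := by
  set m := (t1 + t2) / 2 with hm
  have hint : ∀ p q, IntervalIntegrable
      (fun t => Real.exp (-(lam * t)) * min (t - t1) (t2 - t)) volume p q := fun p q =>
    (by fun_prop : Continuous fun t => Real.exp (-(lam * t)) * min (t - t1) (t2 - t)
      ).intervalIntegrable _ _
  have hleft : ∫ t in t1..m, Real.exp (-(lam * t)) * min (t - t1) (t2 - t)
      = ∫ t in t1..m, Real.exp (-(lam * t)) * (t - t1) := by
    refine intervalIntegral.integral_congr fun t ht => ?_
    rw [uIcc_of_le (by linarith)] at ht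
    simp only [min_eq_left (show t - t1 ≤ t2 - t by linarith [ht.2])]
  have hright : ∫ t in m..t2, Real.exp (-(lam * t)) * min (t - t1) (t2 - t)
      = -∫ t in m..t2, Real.exp (-(lam * t)) * (t - t2) := by
    rw [← intervalIntegral.integral_neg]
    refine intervalIntegral.integral_congr fun t ht => ?_
    rw [uIcc_of_le (by linarith)] at ht
    simp only [min_eq_right (show t2 - t ≤ t - t1 by linarith [ht.1])]
    ring
  rw [← intervalIntegral.integral_add_adjacent_intervals (hint t1 m) (hint m t2), hleft, hright,
    integral_exp_neg_mul_mul_sub hlam, integral_exp_neg_mul_mul_sub hlam, FP3Delta,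
    show -(lam * (t1 + t2) / 2) = -(lam * m) by rw [hm]; ring]
  field_simp
  rw [hm]
  ring

theorem FP3Delta_eq_sq (lam t1 t2 : ℝ) :
    FP3Delta lam t1 t2 = (Real.exp (-(lam * t1) / 2) - Real.exp (-(lam * t2) / 2)) ^ 2 := by
  have hsq : ∀ s, Real.exp s = Real.exp (s / 2) ^ 2 := fun s => by
    rw [sq, ← Real.exp_add, add_halves]
  rw [FP3Delta, hsq (-(lam * t1)), hsq (-(lam * t2)),
    show -(lam * (t1 + t2) / 2) = -(lam * t1) / 2 + -(lam * t2) / 2 by ring, Real.exp_add]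
  ring

theorem FP3Delta_pos {lam t1 t2 : ℝ} (hlam : lam ≠ 0) (h12 : t1 ≠ t2) :
    0 < FP3Delta lam t1 t2 := by
  rw [FP3Delta_eq_sq]
  refine sq_pos_of_ne_zero (sub_ne_zero.mpr (Real.exp_injective.ne fun h => h12 ?_))
  exact mul_left_cancel₀ hlam (by linarith)

section StateEquation

variable {a t1 t2 : ℝ} {x u : ℝ → ℝ}

theorem continuousOn_of_eq_add_integral (hu : IntervalIntegrable u volume t1 t2)
    (hx : ∀ t ∈ uIcc t1 t2, x t = x t1 + ∫ s in t1..t, -(a * u s)) :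
    ContinuousOn x (uIcc t1 t2) :=
  ((intervalIntegral.continuousOn_primitive_interval' (hu.const_mul a).neg left_mem_uIcc
    ).const_add (x t1)).congr hx

theorem FP3Cost_eq_of_eq_add_integral (lam : ℝ) (ha : a ≠ 0)
    (hu : IntervalIntegrable u volume t1 t2)
    (hx : ∀ t ∈ uIcc t1 t2, x t = x t1 + ∫ s in t1..t, -(a * u s)) :
    FP3Cost lam t1 t2 x u = (lam / a - 1) * (∫ t in t1..t2, Real.exp (-(lam * t)) * x t)
      + (Real.exp (-(lam * t2)) * x t2 - Real.exp (-(lam * t1)) * x t1) / a := by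
  set E : ℝ → ℝ := fun t => Real.exp (-(lam * t))
  set X : ℝ → ℝ := fun t => x t1 + ∫ s in t1..t, -(a * u s)
  have hau : IntervalIntegrable (fun s => -(a * u s)) volume t1 t2 := (hu.const_mul a).neg
  have hE : AbsolutelyContinuousOnInterval E t1 t2 :=
    (by fun_prop : ContDiff ℝ 1 E).contDiffOn.absolutelyContinuousOnInterval
  have hX : AbsolutelyContinuousOnInterval X t1 t2 :=
    contDiffOn_const.absolutelyContinuousOnInterval.add
      (hau.absolutelyContinuousOnInterval_intervalIntegral left_mem_uIcc)
  have hXx : EqOn (fun t => E t * X t) (fun t => E t * x t) (uIcc t1 t2) :=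
    fun t ht => by simp only [hx t ht, X]
  have hEx : IntervalIntegrable (fun t => E t * x t) volume t1 t2 :=
    (hE.continuousOn.mul (continuousOn_of_eq_add_integral hu hx)).intervalIntegrable
  have hEu : IntervalIntegrable (fun t => E t * u t) volume t1 t2 :=
    hu.continuousOn_mul hE.continuousOn
  have hderivX : ∀ᵐ t, t ∈ uIoc t1 t2 → E t * deriv X t = -a * (E t * u t) := by
    filter_upwards [hau.ae_hasDerivAt_integral] with t ht ht'
    rw [((ht (uIoc_subset_uIcc ht') t1 left_mem_uIcc).const_add (x t1)).deriv]
    ring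
  have hderivE : ∀ t, deriv E t = -lam * E t := fun t => (hasDerivAt_exp_neg_mul lam t).deriv
  have hparts := hE.integral_mul_deriv_eq_deriv_mul hX
  rw [intervalIntegral.integral_congr_ae hderivX, intervalIntegral.integral_const_mul] at hparts
  simp only [hderivE, mul_assoc] at hparts
  rw [intervalIntegral.integral_const_mul, intervalIntegral.integral_congr hXx,
    show X t1 = x t1 by simp [X], show X t2 = x t2 from (hx t2 right_mem_uIcc).symm] at hparts
  have hcost : FP3Cost lam t1 t2 x u
      = -((∫ t in t1..t2, E t * x t) + ∫ t in t1..t2, E t * u t) := by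
    rw [FP3Cost, ← intervalIntegral.integral_add hEx hEu, ← intervalIntegral.integral_neg]
    simp only [mul_add, E]
  rw [hcost]
  field_simp
  linear_combination hparts

theorem FP3Cost_sub_FP3Cost_eq {lam : ℝ} {y v : ℝ → ℝ} (ha : a ≠ 0)
    (hu : IntervalIntegrable u volume t1 t2)
    (hx : ∀ t ∈ uIcc t1 t2, x t = x t1 + ∫ s in t1..t, -(a * u s))
    (hv : IntervalIntegrable v volume t1 t2)
    (hy : ∀ t ∈ uIcc t1 t2, y t = y t1 + ∫ s in t1..t, -(a * v s))
    (h1 : x t1 = y t1) (h2 : x t2 = y t2) :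
    FP3Cost lam t1 t2 x u - FP3Cost lam t1 t2 y v
      = (lam / a - 1) * ∫ t in t1..t2, Real.exp (-(lam * t)) * (x t - y t) := by
  have hE : ContinuousOn (fun t => Real.exp (-(lam * t))) (uIcc t1 t2) := by fun_prop
  have hEx : IntervalIntegrable (fun t => Real.exp (-(lam * t)) * x t) volume t1 t2 :=
    (hE.mul (continuousOn_of_eq_add_integral hu hx)).intervalIntegrable
  have hEy : IntervalIntegrable (fun t => Real.exp (-(lam * t)) * y t) volume t1 t2 :=
    (hE.mul (continuousOn_of_eq_add_integral hv hy)).intervalIntegrable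
  simp only [mul_sub]
  rw [FP3Cost_eq_of_eq_add_integral lam ha hu hx, FP3Cost_eq_of_eq_add_integral lam ha hv hy,
    intervalIntegral.integral_sub hEx hEy, h1, h2]
  ring

end StateEquation

section Feasible

variable {a t0 T x0 t1 t2 : ℝ} {x u : ℝ → ℝ}

theorem FP3Feasible.integrableOn (hf : FP3Feasible a t0 T x0 x u) :
    IntegrableOn u (Icc t0 T) := by
  refine ⟨hf.1, HasFiniteIntegral.restrict_of_bounded (C := 1) (by simp) ?_⟩
  filter_upwards [hf.2.1] with t ht
  exact abs_le.mpr ht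

theorem FP3Feasible.intervalIntegrable (hf : FP3Feasible a t0 T x0 x u)
    (hsub : uIcc t1 t2 ⊆ Icc t0 T) : IntervalIntegrable u volume t1 t2 :=
  (hf.integrableOn.mono_set hsub).intervalIntegrable

theorem FP3Feasible.eq_add_integral (hf : FP3Feasible a t0 T x0 x u)
    (hsub : uIcc t1 t2 ⊆ Icc t0 T) :
    ∀ t ∈ uIcc t1 t2, x t = x t1 + ∫ s in t1..t, -(a * u s) := by
  intro t ht
  have ht1 := hsub left_mem_uIcc
  have ht' := hsub ht
  have hint : ∀ p ∈ Icc t0 T, IntervalIntegrable (fun s => -(a * u s)) volume t0 p :=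
    fun p hp => ((hf.intervalIntegrable
      (uIcc_subset_Icc (left_mem_Icc.mpr (ht'.1.trans ht'.2)) hp)).const_mul a).neg
  rw [hf.2.2.1 t ht', hf.2.2.1 t1 ht1, add_assoc,
    intervalIntegral.integral_add_adjacent_intervals (hint t1 ht1)
      ((hint t1 ht1).symm.trans (hint t ht'))]

end Feasible

theorem fp3_lemma_technical1b_general
    (a lam t0 T x0 : ℝ) (hal : lam < a) (hlam : 0 < lam)
    (t1 t2 : ℝ) (h01 : t0 ≤ t1) (h12 : t1 < t2) (h2T : t2 ≤ T)
    (xt ut xh uh : ℝ → ℝ)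
    (hft : FP3Feasible a t0 T x0 xt ut) (hfh : FP3Feasible a t0 T x0 xh uh)
    (hxt : ∀ t ∈ Icc t1 t2, xt t = -1)
    (hxh1 : ∀ t ∈ Icc t1 ((t1 + t2) / 2), xh t = -1 + a * (t - t1))
    (hxh2 : ∀ t ∈ Ioc ((t1 + t2) / 2) t2, xh t = -1 - a * (t - t2)) :
    FP3Cost lam t1 t2 xh uh - FP3Cost lam t1 t2 xt ut
      = -((1 / lam) * (a / lam - 1) * FP3Delta lam t1 t2) ∧
    FP3Cost lam t1 t2 xh uh < FP3Cost lam t1 t2 xt ut := by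
  have ha : a ≠ 0 := (hlam.trans hal).ne'
  have hsub : uIcc t1 t2 ⊆ Icc t0 T :=
    uIcc_subset_Icc ⟨h01, h12.le.trans h2T⟩ ⟨h01.trans h12.le, h2T⟩
  have hgap : EqOn (fun t => Real.exp (-(lam * t)) * (xh t - xt t))
      (fun t => a * (Real.exp (-(lam * t)) * min (t - t1) (t2 - t))) (uIcc t1 t2) := by
    intro t ht
    rw [uIcc_of_le h12.le] at ht
    dsimp only
    rcases le_or_gt t ((t1 + t2) / 2) with hm | hm
    · rw [hxt t ht, hxh1 t ⟨ht.1, hm⟩, min_eq_left (by linarith)]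
      ring
    · rw [hxt t ht, hxh2 t ⟨hm, ht.2⟩, min_eq_right (by linarith)]
      ring
  have hdiff : FP3Cost lam t1 t2 xh uh - FP3Cost lam t1 t2 xt ut
      = -((1 / lam) * (a / lam - 1) * FP3Delta lam t1 t2) := by
    rw [FP3Cost_sub_FP3Cost_eq ha (hfh.intervalIntegrable hsub)
      (hfh.eq_add_integral hsub) (hft.intervalIntegrable hsub) (hft.eq_add_integral hsub)
      (by rw [hxt t1 ⟨le_rfl, h12.le⟩, hxh1 t1 ⟨le_rfl, by linarith⟩]; ring)
      (by rw [hxt t2 ⟨h12.le, le_rfl⟩, hxh2 t2 ⟨by linarith, le_rfl⟩]; ring),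
      intervalIntegral.integral_congr hgap, intervalIntegral.integral_const_mul,
      integral_exp_neg_mul_mul_min_sub hlam.ne' h12.le]
    field_simp
    ring
  have hcoef : 0 < a / lam - 1 := sub_pos.mpr ((one_lt_div hlam).mpr hal)
  refine ⟨hdiff, sub_neg.mp (hdiff ▸ neg_neg_of_pos ?_)⟩
  exact mul_pos (mul_pos (one_div_pos.mpr hlam) hcoef) (FP3Delta_pos hlam.ne' h12.ne)

/-- Lemma 3.3: comparison of the restricted costs of a process
staying at the lower boundary `-1` and of the "tent" process on `[t1,t2]`. -/
theorem fp3_lemma_technical1b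
    (a lam t0 T x0 : ℝ) (hal : lam < a) (hlam : 0 < lam)
    (ht0 : 0 ≤ t0) (htT : t0 < T) (hx0 : x0 ∈ Icc (-1 : ℝ) 1)
    (t1 t2 : ℝ) (h01 : t0 ≤ t1) (h12 : t1 < t2) (h2T : t2 ≤ T)
    (xt ut xh uh : ℝ → ℝ)
    (hft : FP3Feasible a t0 T x0 xt ut) (hfh : FP3Feasible a t0 T x0 xh uh)
    (hxt : ∀ t ∈ Icc t1 t2, xt t = -1)
    (hxh1 : ∀ t ∈ Icc t1 ((t1 + t2) / 2), xh t = -1 + a * (t - t1))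
    (hxh2 : ∀ t ∈ Ioc ((t1 + t2) / 2) t2, xh t = -1 - a * (t - t2)) :
    FP3Cost lam t1 t2 xh uh - FP3Cost lam t1 t2 xt ut
      = -((1 / lam) * (a / lam - 1) * FP3Delta lam t1 t2) ∧
    FP3Cost lam t1 t2 xh uh < FP3Cost lam t1 t2 xt ut :=
  fp3_lemma_technical1b_general a lam t0 T x0 hal hlam t1 t2 h01 h12 h2T xt ut xh uh hft hfh hxt
    hxh1 hxh2
end
end
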